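/- arXiv:2504.11342 — 2 statements merged into one kernel-verified Lean document; each statement's English description precedes it below -/
import Mathlib

section
/- Strong shift equivalence implies shift equivalence: if there is a finite chain A = A_0, A_1, …, A_k = B of square nonnegative integer matrices such that consecutive matrices are elementary shift equivalent, then A and B are shift equivalent (for some lag l ≥ 1). -/
/-- Elementary shift equivalence of square nonnegative integer matrices. -/
def ElemShiftEquiv {n m : ℕ} (A : Matrix (Fin n) (Fin n) ℕ)
    (B : Matrix (Fin m) (Fin m) ℕ) : Prop :=
  ∃ (R : Matrix (Fin n) (Fin m) ℕ) (S : Matrix (Fin m) (Fin n) ℕ),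
    A = R * S ∧ B = S * R

/-- Shift equivalence (for some lag `l ≥ 1`) of square nonnegative integer matrices. -/
def ShiftEquiv {n m : ℕ} (A : Matrix (Fin n) (Fin n) ℕ)
    (B : Matrix (Fin m) (Fin m) ℕ) : Prop :=
  ∃ (l : ℕ), 1 ≤ l ∧
    ∃ (R : Matrix (Fin n) (Fin m) ℕ) (S : Matrix (Fin m) (Fin n) ℕ),
      A ^ l = R * S ∧ B ^ l = S * R ∧ A * R = R * B ∧ S * A = B * S

lemma ShiftEquiv.refl' {n : ℕ} (A : Matrix (Fin n) (Fin n) ℕ) : ShiftEquiv A A :=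
  ⟨1, le_refl 1, A, 1, by simp, by simp, rfl, by simp⟩

lemma ElemShiftEquiv.toShiftEquiv {n m : ℕ} {A : Matrix (Fin n) (Fin n) ℕ}
    {B : Matrix (Fin m) (Fin m) ℕ} (h : ElemShiftEquiv A B) : ShiftEquiv A B := by
  obtain ⟨R, S, hA, hB⟩ := h
  exact ⟨1, le_refl 1, R, S, by simp [hA], by simp [hB],
    by rw [hA, hB, Matrix.mul_assoc], by rw [hA, hB, Matrix.mul_assoc]⟩

lemma ShiftEquiv.trans' {n m p : ℕ} {A : Matrix (Fin n) (Fin n) ℕ}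
    {B : Matrix (Fin m) (Fin m) ℕ} {C : Matrix (Fin p) (Fin p) ℕ}
    (hAB : ShiftEquiv A B) (hBC : ShiftEquiv B C) : ShiftEquiv A C := by
  obtain ⟨l, hl, R1, S1, h1, h2, h3, h4⟩ := hAB
  obtain ⟨m', hm, R2, S2, g1, g2, g3, g4⟩ := hBC
  have hAR : ∀ j : ℕ, A ^ j * R1 = R1 * B ^ j := by
    intro j
    induction j with
    | zero => simp
    | succ j ih =>
      rw [pow_succ, pow_succ, Matrix.mul_assoc, h3, ← Matrix.mul_assoc, ih,
        Matrix.mul_assoc]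
  have hBR : ∀ j : ℕ, B ^ j * R2 = R2 * C ^ j := by
    intro j
    induction j with
    | zero => simp
    | succ j ih =>
      rw [pow_succ, pow_succ, Matrix.mul_assoc, g3, ← Matrix.mul_assoc, ih,
        Matrix.mul_assoc]
  have hSA : ∀ j : ℕ, S1 * A ^ j = B ^ j * S1 := by
    intro j
    induction j with
    | zero => simp
    | succ j ih =>
      rw [pow_succ', pow_succ', ← Matrix.mul_assoc, h4, Matrix.mul_assoc, ih,
        ← Matrix.mul_assoc]
  have hSB : ∀ j : ℕ, S2 * B ^ j = C ^ j * S2 := by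
    intro j
    induction j with
    | zero => simp
    | succ j ih =>
      rw [pow_succ', pow_succ', ← Matrix.mul_assoc, g4, Matrix.mul_assoc, ih,
        ← Matrix.mul_assoc]
  refine ⟨l + m', le_trans hl (Nat.le_add_right _ _), R1 * R2, S2 * S1, ?_, ?_, ?_, ?_⟩
  · rw [pow_add, h1, Matrix.mul_assoc, hSA, g1]
    simp [Matrix.mul_assoc]
  · rw [pow_add, show S2 * S1 * (R1 * R2) = S2 * (S1 * R1) * R2 from by
      simp [Matrix.mul_assoc], ← h2, hSB, Matrix.mul_assoc, ← g2]
  · rw [← Matrix.mul_assoc, h3, Matrix.mul_assoc, g3, ← Matrix.mul_assoc]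
  · rw [Matrix.mul_assoc, h4, ← Matrix.mul_assoc, g4, Matrix.mul_assoc]

/-- Strong shift equivalence implies shift equivalence. -/
theorem strong_shift_equiv_implies_shift_equiv
    (k : ℕ) (n : Fin (k + 1) → ℕ)
    (A : ∀ i : Fin (k + 1), Matrix (Fin (n i)) (Fin (n i)) ℕ)
    (h : ∀ i : Fin k, ElemShiftEquiv (A i.castSucc) (A i.succ)) :
    ShiftEquiv (A 0) (A (Fin.last k)) := by
  have key : ∀ i : Fin (k + 1), ShiftEquiv (A 0) (A i) := by
    intro i
    induction i using Fin.induction with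
    | zero => exact ShiftEquiv.refl' _
    | succ i ih => exact ih.trans' (h i).toShiftEquiv
  exact key (Fin.last k)
end

section
/- Let E be a finite graph consisting of a single cycle of length k (a graph of Gelfand–Kirillov dimension one). Then the talented monoid T_E is ℤ-isomorphic to the ℤ-cyclic monoid ℕ^k with cyclic shift action; in particular T_E is simple and k-periodic. -/
/-! Along the edge `v → v + 1` both the vertex and the level go up by one, so the
relations preserve `v - i ∈ ZMod k`, and `v(i) ↦ e_{v - i}` descends to `T_E → ℕ^k`.
Conversely, walking back around the cycle shows that `v(i) = (v - i)(0)` in `T_E`, so the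
level-zero generators `w(0)` span `T_E`, and `e_w ↦ w(0)` is the inverse map. -/

/-- The free commutative monoid on the generators `v(i)`, `v` a vertex of the
cycle of length `k` (indexed by `ZMod k`) and `i ∈ ℤ`. -/
abbrev FreeGen (k : ℕ) := (ZMod k × ℤ) →₀ ℕ

/-- The defining relation of the talented monoid of the cycle of length `k`:
`v(i) = r(e_v)(i+1) = (v+1)(i+1)` for the unique edge `e_v : v → v+1`. -/
def cycleRel (k : ℕ) : FreeGen k → FreeGen k → Prop := fun a b =>
  ∃ (v : ZMod k) (i : ℤ),
    a = Finsupp.single (v, i) 1 ∧ b = Finsupp.single (v + 1, i + 1) 1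

/-- The talented monoid of the cycle of length `k`: the quotient of the free
commutative monoid on the `v(i)` by the congruence generated by the relations. -/
def TalentedCycle (k : ℕ) := (addConGen (cycleRel k)).Quotient

noncomputable instance (k : ℕ) : AddCommMonoid (TalentedCycle k) := by
  unfold TalentedCycle; infer_instance

/-- The action of `n : ℤ` on `ℕ^k` (indexed by `ZMod k`) by cyclic shifts. -/
def cyclicAct {k : ℕ} (n : ℤ) (a : ZMod k → ℕ) : ZMod k → ℕ :=
  fun i => a (i + (n : ZMod k))

section

variable (k : ℕ)

noncomputable def cycleCoord : FreeGen k →+ (ZMod k → ℕ) :=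
  Finsupp.liftAddHom fun p => AddMonoidHom.single (fun _ : ZMod k => ℕ) (p.1 - (p.2 : ZMod k))

theorem cycleCoord_single (v : ZMod k) (i : ℤ) (n : ℕ) :
    cycleCoord k (Finsupp.single (v, i) n) = Pi.single (v - (i : ZMod k)) n :=
  Finsupp.liftAddHom_apply_single _ _ _

theorem addConGen_cycleRel_le_ker_cycleCoord :
    addConGen (cycleRel k) ≤ AddCon.ker (cycleCoord k) := by
  refine AddCon.addConGen_le.mpr ?_
  rintro _ _ ⟨v, i, rfl, rfl⟩
  simp only [AddCon.ker_rel, cycleCoord_single, Int.cast_add, Int.cast_one,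
    add_sub_add_right_eq_sub]

noncomputable def talentedToPi : TalentedCycle k →+ (ZMod k → ℕ) :=
  AddCon.lift _ (cycleCoord k) (addConGen_cycleRel_le_ker_cycleCoord k)

theorem talentedToPi_mk (f : FreeGen k) :
    talentedToPi k ((addConGen (cycleRel k)).mk' f) = cycleCoord k f :=
  AddCon.lift_mk' _ f

theorem mk_single_eq_mk_single_succ (v : ZMod k) (i : ℤ) :
    (addConGen (cycleRel k)).mk' (Finsupp.single (v, i) 1) =
      (addConGen (cycleRel k)).mk' (Finsupp.single (v + 1, i + 1) 1) :=
  (AddCon.eq _).mpr (AddConGen.Rel.of _ _ ⟨v, i, rfl, rfl⟩)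

theorem mk_single_eq_mk_single_zero (v : ZMod k) (i : ℤ) :
    (addConGen (cycleRel k)).mk' (Finsupp.single (v, i) 1) =
      (addConGen (cycleRel k)).mk' (Finsupp.single (v - (i : ZMod k), 0) 1) := by
  induction i using Int.induction_on generalizing v with
  | zero => simp
  | succ j ih =>
    rw [← sub_add_cancel v 1, ← mk_single_eq_mk_single_succ, ih]
    congr 3
    push_cast
    ring
  | pred j ih =>
    rw [mk_single_eq_mk_single_succ, sub_add_cancel, ih]
    congr 3
    push_cast
    ring

variable [NeZero k]

noncomputable def piToTalented : (ZMod k → ℕ) →+ TalentedCycle k :=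
  (addConGen (cycleRel k)).mk'.comp <|
    (Finsupp.mapDomain.addMonoidHom fun w : ZMod k => (w, (0 : ℤ))).comp
      Finsupp.addEquivFunOnFinite.symm.toAddMonoidHom

theorem piToTalented_single (w : ZMod k) (n : ℕ) :
    piToTalented k (Pi.single w n) = (addConGen (cycleRel k)).mk' (Finsupp.single (w, 0) n) := by
  change (addConGen (cycleRel k)).mk' (Finsupp.mapDomain _ (Finsupp.equivFunOnFinite.symm _)) = _
  rw [Finsupp.equivFunOnFinite_symm_single, Finsupp.mapDomain_single]

theorem piToTalented_comp_talentedToPi :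
    (piToTalented k).comp (talentedToPi k) = AddMonoidHom.id _ := by
  refine AddCon.hom_ext <| Finsupp.addHom_ext' fun ⟨v, i⟩ => AddMonoidHom.ext_nat ?_
  show piToTalented k
      (talentedToPi k ((addConGen (cycleRel k)).mk' (Finsupp.single (v, i) 1))) =
    (addConGen (cycleRel k)).mk' (Finsupp.single (v, i) 1)
  rw [talentedToPi_mk, cycleCoord_single, piToTalented_single]
  exact (mk_single_eq_mk_single_zero k v i).symm

theorem talentedToPi_comp_piToTalented :
    (talentedToPi k).comp (piToTalented k) = AddMonoidHom.id _ := by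
  refine AddMonoidHom.functions_ext' _ _ _ fun w => AddMonoidHom.ext_nat ?_
  show talentedToPi k (piToTalented k (Pi.single w 1)) = Pi.single w 1
  rw [piToTalented_single, talentedToPi_mk, cycleCoord_single, Int.cast_zero, sub_zero]

noncomputable def talentedEquivPi : TalentedCycle k ≃+ (ZMod k → ℕ) :=
  (talentedToPi k).toAddEquiv (piToTalented k) (piToTalented_comp_talentedToPi k)
    (talentedToPi_comp_piToTalented k)

theorem talentedEquivPi_mk_single (v : ZMod k) (i : ℤ) :
    talentedEquivPi k ((addConGen (cycleRel k)).mk' (Finsupp.single (v, i) 1)) =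
      Pi.single (v - (i : ZMod k)) 1 :=
  (talentedToPi_mk k _).trans (cycleCoord_single k v i 1)

end

theorem cyclicAct_single {k : ℕ} (n : ℤ) (w : ZMod k) (m : ℕ) :
    cyclicAct n (Pi.single w m) = Pi.single (w - (n : ZMod k)) m := by
  funext u
  simp only [cyclicAct, Pi.single_apply, eq_sub_iff_add_eq]

/-- The talented monoid of the cycle of length `k` is ℤ-isomorphic to the
ℤ-cyclic monoid `ℕ^k` with the cyclic shift action: there is a monoid isomorphism
sending the generator `v(i)` to the basis vector at `v − i`, equivariant for the
ℤ-actions (expressed on generators). -/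
theorem talented_monoid_of_cycle (k : ℕ) [NeZero k] :
    ∃ φ : TalentedCycle k ≃+ (ZMod k → ℕ),
      (∀ (v : ZMod k) (i : ℤ),
        φ ((addConGen (cycleRel k)).mk' (Finsupp.single (v, i) 1)) =
          Pi.single (v - (i : ZMod k)) 1) ∧
      (∀ (v : ZMod k) (i n : ℤ),
        φ ((addConGen (cycleRel k)).mk' (Finsupp.single (v, i + n) 1)) =
          cyclicAct n (φ ((addConGen (cycleRel k)).mk' (Finsupp.single (v, i) 1)))) := by
  refine ⟨talentedEquivPi k, talentedEquivPi_mk_single k, fun v i n => ?_⟩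
  rw [talentedEquivPi_mk_single, talentedEquivPi_mk_single, cyclicAct_single, Int.cast_add,
    sub_add_eq_sub_sub]
end
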